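/- arXiv:2101.10895 — 2 statements merged into one kernel-verified Lean document; each statement's English description precedes it below -/
import Mathlib

section
/- Let f be a proper convex function on a real inner product space, let C be a convex open set, let ξ be a differentiable strictly convex function with Bregman divergence Ψ_ξ(x‖y) = ξ(x) − ξ(y) − ⟨∇ξ(y), x − y⟩. For η > 0 and x₀, let x* = argmin_{x ∈ C} { f(x) + η⁻¹ Ψ_ξ(x‖x₀) }. Then for all x ∈ C: f(x) − f(x*) ≥ η⁻¹ ( Ψ_ξ(x*‖x₀) + Ψ_ξ(x‖x*) − Ψ_ξ(x‖x₀) ). -/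
/-!
If `a` minimizes `f + h` on `C` with `f` convex and `h` differentiable at `a`, then along the
segment `t ↦ a + t • (x - a)` convexity gives `h a ≤ h (a + t • (x - a)) + t * (f x - f a)`,
so the derivative of the right side at `t = 0` is nonnegative: `-h' (x - a) ≤ f x - f a`.
For `h = η⁻¹ * Ψ_ξ(· ‖ x₀)` the gradient at `x*` is `η⁻¹ • (∇ξ x* - ∇ξ x₀)`, and the three-point
identity `Ψ(x*‖x₀) + Ψ(x‖x*) - Ψ(x‖x₀) = ⟪∇ξ x₀ - ∇ξ x*, x - x*⟫` turns this into the claim.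
-/

open scoped RealInnerProductSpace

open Set InnerProductSpace

section FirstOrder

variable {E : Type*} [NormedAddCommGroup E] [NormedSpace ℝ E]

theorem ConvexOn.le_add_smul_sub {f : E → ℝ} {C : Set E} (hf : ConvexOn ℝ C f) {x y : E}
    (hx : x ∈ C) (hy : y ∈ C) {t : ℝ} (ht : t ∈ Icc (0 : ℝ) 1) :
    f (x + t • (y - x)) ≤ f x + t * (f y - f x) := by
  have h := hf.2 hx hy (sub_nonneg.2 ht.2) ht.1 (sub_add_cancel 1 t)
  have hpt : (1 - t) • x + t • y = x + t • (y - x) := by module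
  rw [hpt, smul_eq_mul, smul_eq_mul] at h
  linarith

theorem ConvexOn.neg_fderiv_le_sub_of_isMinOn_add {f h : E → ℝ} {h' : E →L[ℝ] ℝ} {C : Set E}
    {a x : E} (hf : ConvexOn ℝ C f) (hh : HasFDerivAt h h' a)
    (hmin : IsMinOn (fun y => f y + h y) C a) (ha : a ∈ C) (hx : x ∈ C) :
    -h' (x - a) ≤ f x - f a := by
  set φ : ℝ → ℝ := fun t => h (a + t • (x - a)) + t * (f x - f a)
  have hφmin : IsMinOn φ (Icc 0 1) 0 := isMinOn_iff.2 fun t ht => by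
    have hmin_t := isMinOn_iff.1 hmin _ (hf.1.add_smul_sub_mem ha hx ht)
    have hconv := hf.le_add_smul_sub ha hx ht
    simp only [φ, zero_smul, add_zero, zero_mul] at hmin_t ⊢
    linarith
  have hline : HasDerivAt (fun t : ℝ => a + t • (x - a)) (x - a) 0 := by
    simpa using ((hasDerivAt_id (0 : ℝ)).smul_const (x - a)).const_add a
  have hh0 : HasFDerivAt h h' (a + (0 : ℝ) • (x - a)) := by simpa using hh
  have hφ : HasDerivAt φ (h' (x - a) + 1 * (f x - f a)) 0 :=
    (hh0.comp_hasDerivAt 0 hline).add ((hasDerivAt_id 0).mul_const _)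
  have hcone : (1 : ℝ) ∈ posTangentConeAt (Icc (0 : ℝ) 1) 0 :=
    mem_posTangentConeAt_of_segment_subset (by simp [segment_eq_Icc])
  have := hφmin.localize.hasFDerivWithinAt_nonneg hφ.hasFDerivAt.hasFDerivWithinAt hcone
  simp only [ContinuousLinearMap.toSpanSingleton_apply, one_smul, one_mul] at this
  linarith

end FirstOrder

section Bregman

variable {E : Type*} [NormedAddCommGroup E] [InnerProductSpace ℝ E] [CompleteSpace E]

noncomputable def bregmanDiv (ξ : E → ℝ) (x y : E) : ℝ :=
  ξ x - ξ y - ⟪gradient ξ y, x - y⟫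

theorem bregmanDiv_three_point (ξ : E → ℝ) (x y z : E) :
    bregmanDiv ξ y z + bregmanDiv ξ x y - bregmanDiv ξ x z =
      ⟪gradient ξ z - gradient ξ y, x - y⟫ := by
  have hsplit : x - z = (y - z) + (x - y) := by abel
  simp only [bregmanDiv, hsplit, inner_add_right, inner_sub_left]
  ring

theorem hasGradientAt_bregmanDiv_left {ξ : E → ℝ} {x : E} (hξ : DifferentiableAt ℝ ξ x)
    (y : E) : HasGradientAt (fun z => bregmanDiv ξ z y) (gradient ξ x - gradient ξ y) x := by
  have hlin : HasFDerivAt (fun z => ⟪gradient ξ y, z - y⟫) (toDual ℝ E (gradient ξ y)) x := by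
    simpa only [inner_sub_right, toDual_apply_apply] using
      (toDual ℝ E (gradient ξ y)).hasFDerivAt.sub_const ⟪gradient ξ y, y⟫
  rw [hasGradientAt_iff_hasFDerivAt, map_sub]
  exact (hξ.hasGradientAt.hasFDerivAt.sub_const (ξ y)).sub hlin

end Bregman

theorem stmt_0_general {E : Type*} [NormedAddCommGroup E] [InnerProductSpace ℝ E] [CompleteSpace E]
    (f ξ : E → ℝ) (C : Set E)
    (hf : ConvexOn ℝ C f) (hξdiff : Differentiable ℝ ξ)
    (Ψ : E → E → ℝ)
    (hΨ : ∀ x y, Ψ x y = ξ x - ξ y - ⟪gradient ξ y, x - y⟫)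
    (η : ℝ) (x₀ xstar : E) (hxstar : xstar ∈ C)
    (hmin : IsMinOn (fun x => f x + η⁻¹ * Ψ x x₀) C xstar) :
    ∀ x ∈ C, f x - f xstar ≥ η⁻¹ * (Ψ xstar x₀ + Ψ x xstar - Ψ x x₀) := by
  intro x hx
  obtain rfl : Ψ = bregmanDiv ξ := funext₂ hΨ
  have hderiv := ((hasGradientAt_bregmanDiv_left (hξdiff xstar) x₀).hasFDerivAt).const_mul η⁻¹
  have hopt := hf.neg_fderiv_le_sub_of_isMinOn_add hderiv hmin hxstar hx
  rw [bregmanDiv_three_point]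
  simp only [smul_apply, toDual_apply_apply, smul_eq_mul, inner_sub_left] at hopt ⊢
  linarith

/-- Mirror-descent / Bregman three-point lemma (minimization form). -/
theorem stmt_0 {E : Type*} [NormedAddCommGroup E] [InnerProductSpace ℝ E] [CompleteSpace E]
    (f ξ : E → ℝ) (C : Set E) (hCopen : IsOpen C) (hCconv : Convex ℝ C)
    (hf : ConvexOn ℝ C f) (hξdiff : Differentiable ℝ ξ)
    (hξstrict : StrictConvexOn ℝ Set.univ ξ)
    (Ψ : E → E → ℝ)
    (hΨ : ∀ x y, Ψ x y = ξ x - ξ y - ⟪gradient ξ y, x - y⟫)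
    (η : ℝ) (hη : 0 < η) (x₀ xstar : E) (hxstar : xstar ∈ C)
    (hmin : IsMinOn (fun x => f x + η⁻¹ * Ψ x x₀) C xstar) :
    ∀ x ∈ C, f x - f xstar ≥ η⁻¹ * (Ψ xstar x₀ + Ψ x xstar - Ψ x x₀) :=
  stmt_0_general f ξ C hf hξdiff Ψ hΨ η x₀ xstar hxstar hmin
end

section
/- Let ν be any nonnegative function on S × A satisfying the flow-balance equations Σ_{(s,a)} ν(s,a)(1{s=s′} − γ P(s′|s,a)) = (1−γ) μ₀(s′) for all s′, with μ₀ a probability distribution having full support. Define the stationary policy π̃(a|s) = ν(s,a)/Σ_{a'} ν(s,a') (wherever the denominator is positive). Then the occupation measure of π̃ equals ν, i.e., ν^{π̃}(s,a) = ν(s,a) for all (s,a) with Σ_{a'} ν(s,a') > 0. -/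
/-- Joint state-action distribution at time `t` of the Markov chain induced by
a stationary policy `pol` with transition kernel `P` and initial state
distribution `μ`. -/
noncomputable def occ {S A : Type*} [Fintype S] [Fintype A]
    (P : S → A → S → ℝ) (pol : S → A → ℝ) (μ : S → ℝ) : ℕ → S → A → ℝ
  | 0 => fun s a => μ s * pol s a
  | t + 1 => fun s' a' => (∑ s, ∑ a, occ P pol μ t s a * P s a s') * pol s' a'

/-- Discounted occupation measure `ν^π(s,a) = (1−γ) Σ_t γ^t P^π(s_t=s, a_t=a)`. -/
noncomputable def occMeas {S A : Type*} [Fintype S] [Fintype A] (γ : ℝ)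
    (P : S → A → S → ℝ) (pol : S → A → ℝ) (μ : S → ℝ) (s : S) (a : A) : ℝ :=
  (1 - γ) * ∑' t : ℕ, γ ^ t * occ P pol μ t s a

/-!
Let `flowStep P π x (s', a') = (∑ₛₐ x(s,a) P(s,a,s')) π(s',a')` push a state-action measure one step
forward. For nonnegative substochastic `P` and `π` this map does not increase the `ℓ¹` norm, so
`flowMap x = (1-γ) μ ⊗ π + γ · flowStep x` is a `γ`-contraction in `ℓ¹` and has at most one fixed
point. The occupation measure of `π` is a fixed point, because the distributions `occ t` satisfy
`occ (t+1) = flowStep (occ t)`. The flow-balance equations say that the state marginal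
`ρ(s) = ∑ₐ ν(s,a)` satisfies `ρ(s') = (1-γ) μ₀(s') + γ ∑ₛₐ ν(s,a) P(s,a,s')`; since
`ν(s,a) = ρ(s) π̃(a|s)` (both sides vanish when `ρ(s) = 0`), `ν` is a fixed point as well.
-/

open Finset Function

section Flow

variable {S A : Type*} [Fintype S] [Fintype A]

noncomputable def flowStep (P : S → A → S → ℝ) (pol : S → A → ℝ) (x : S → A → ℝ) :
    S → A → ℝ :=
  fun s' a' => (∑ s, ∑ a, x s a * P s a s') * pol s' a'

noncomputable def flowMap (γ : ℝ) (P : S → A → S → ℝ) (pol : S → A → ℝ) (μ : S → ℝ)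
    (x : S → A → ℝ) : S → A → ℝ :=
  fun s a => (1 - γ) * μ s * pol s a + γ * flowStep P pol x s a

theorem occ_succ (P : S → A → S → ℝ) (pol : S → A → ℝ) (μ : S → ℝ) (t : ℕ) :
    occ P pol μ (t + 1) = flowStep P pol (occ P pol μ t) :=
  rfl

theorem flowStep_sub (P : S → A → S → ℝ) (pol : S → A → ℝ) (x y : S → A → ℝ) :
    flowStep P pol (x - y) = flowStep P pol x - flowStep P pol y := by
  funext s' a'
  simp only [flowStep, Pi.sub_apply, sub_mul, sum_sub_distrib]

theorem abs_le_sum_sum_abs (x : S → A → ℝ) (s : S) (a : A) :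
    |x s a| ≤ ∑ s, ∑ a, |x s a| :=
  calc |x s a| ≤ ∑ a, |x s a| := single_le_sum (fun a _ => abs_nonneg (x s a)) (mem_univ a)
    _ ≤ ∑ s, ∑ a, |x s a| :=
      single_le_sum (f := fun s => ∑ a, |x s a|)
        (fun s _ => sum_nonneg fun a _ => abs_nonneg (x s a)) (mem_univ s)

variable {P : S → A → S → ℝ} {pol : S → A → ℝ}
  (hP0 : ∀ s a s', 0 ≤ P s a s') (hP1 : ∀ s a, ∑ s', P s a s' ≤ 1)
  (hpol0 : ∀ s a, 0 ≤ pol s a) (hpol1 : ∀ s, ∑ a, pol s a ≤ 1)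
include hP0 hP1 hpol0 hpol1

theorem sum_sum_abs_flowStep_le (x : S → A → ℝ) :
    ∑ s, ∑ a, |flowStep P pol x s a| ≤ ∑ s, ∑ a, |x s a| :=
  calc ∑ s', ∑ a', |flowStep P pol x s' a'|
      = ∑ s', |∑ s, ∑ a, x s a * P s a s'| * ∑ a', pol s' a' := by
        simp only [flowStep, abs_mul, abs_of_nonneg (hpol0 _ _), mul_sum]
    _ ≤ ∑ s', ∑ s, ∑ a, |x s a| * P s a s' := by
        gcongr with s'
        calc |∑ s, ∑ a, x s a * P s a s'| * ∑ a', pol s' a'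
            ≤ |∑ s, ∑ a, x s a * P s a s'| := mul_le_of_le_one_right (abs_nonneg _) (hpol1 s')
          _ ≤ ∑ s, |∑ a, x s a * P s a s'| := abs_sum_le_sum_abs _ _
          _ ≤ ∑ s, ∑ a, |x s a| * P s a s' := by
              gcongr with s
              refine (abs_sum_le_sum_abs _ _).trans_eq (sum_congr rfl fun a _ => ?_)
              rw [abs_mul, abs_of_nonneg (hP0 _ _ _)]
    _ = ∑ s, ∑ a, |x s a| * ∑ s', P s a s' := by
        simp only [mul_sum]
        rw [sum_comm]
        exact sum_congr rfl fun s _ => sum_comm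
    _ ≤ ∑ s, ∑ a, |x s a| := by
        gcongr with s _ a
        exact mul_le_of_le_one_right (abs_nonneg _) (hP1 s a)

theorem sum_sum_abs_occ_le (μ : S → ℝ) (t : ℕ) :
    ∑ s, ∑ a, |occ P pol μ t s a| ≤ ∑ s, |μ s| := by
  induction t with
  | zero =>
    calc ∑ s, ∑ a, |μ s * pol s a| = ∑ s, |μ s| * ∑ a, pol s a := by
          simp only [abs_mul, abs_of_nonneg (hpol0 _ _), mul_sum]
      _ ≤ ∑ s, |μ s| := by
          gcongr with s
          exact mul_le_of_le_one_right (abs_nonneg _) (hpol1 s)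
  | succ t ih => exact (sum_sum_abs_flowStep_le hP0 hP1 hpol0 hpol1 _).trans ih

theorem summable_occ {γ : ℝ} (hγ0 : 0 ≤ γ) (hγ1 : γ < 1) (μ : S → ℝ) (s : S) (a : A) :
    Summable fun t => γ ^ t * occ P pol μ t s a := by
  refine .of_norm_bounded ((summable_geometric_of_lt_one hγ0 hγ1).mul_right (∑ s, |μ s|))
    fun t => ?_
  rw [Real.norm_eq_abs, abs_mul, abs_of_nonneg (pow_nonneg hγ0 t)]
  gcongr
  exact (abs_le_sum_sum_abs _ s a).trans (sum_sum_abs_occ_le hP0 hP1 hpol0 hpol1 μ t)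

theorem isFixedPt_occMeas {γ : ℝ} (hγ0 : 0 ≤ γ) (hγ1 : γ < 1) (μ : S → ℝ) :
    IsFixedPt (flowMap γ P pol μ) (occMeas γ P pol μ) := by
  have hsum := summable_occ hP0 hP1 hpol0 hpol1 hγ0 hγ1 μ
  have htail : ∀ s' a', ∑' t, γ ^ t * occ P pol μ (t + 1) s' a'
      = flowStep P pol (fun s a => ∑' t, γ ^ t * occ P pol μ t s a) s' a' := by
    intro s' a'
    simp only [occ_succ, flowStep, mul_sum, sum_mul]
    rw [Summable.tsum_finsetSum fun s _ => summable_sum fun a _ =>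
      ((hsum s a).mul_right (P s a s' * pol s' a')).congr fun t => by ring]
    refine sum_congr rfl fun s _ => ?_
    rw [Summable.tsum_finsetSum fun a _ =>
      ((hsum s a).mul_right (P s a s' * pol s' a')).congr fun t => by ring]
    refine sum_congr rfl fun a _ => ?_
    rw [← tsum_mul_right, ← tsum_mul_right]
    exact tsum_congr fun t => by ring
  have hshift : ∀ s a, ∑' t, γ ^ t * occ P pol μ t s a
      = μ s * pol s a + γ * ∑' t, γ ^ t * occ P pol μ (t + 1) s a := by
    intro s a
    rw [(hsum s a).tsum_eq_zero_add, ← tsum_mul_left]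
    simp only [pow_zero, one_mul, pow_succ', mul_assoc]
    rfl
  funext s a
  simp only [flowMap, occMeas]
  rw [hshift, htail]
  simp only [flowStep, occMeas, mul_assoc, ← mul_sum]
  ring

theorem Function.IsFixedPt.eq_of_flowMap {γ : ℝ} (hγ0 : 0 ≤ γ) (hγ1 : γ < 1) {μ : S → ℝ}
    {x y : S → A → ℝ} (hx : IsFixedPt (flowMap γ P pol μ) x)
    (hy : IsFixedPt (flowMap γ P pol μ) y) : x = y := by
  set d := x - y
  have hd : ∀ s a, d s a = γ * flowStep P pol d s a := by
    intro s a
    have hxs := congrFun (congrFun hx s) a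
    have hys := congrFun (congrFun hy s) a
    simp only [flowMap] at hxs hys
    simp only [d, flowStep_sub, Pi.sub_apply]
    linear_combination hys - hxs
  have hcontr : ∑ s, ∑ a, |d s a| ≤ γ * ∑ s, ∑ a, |d s a| :=
    calc ∑ s, ∑ a, |d s a| = γ * ∑ s, ∑ a, |flowStep P pol d s a| := by
          simp only [hd, abs_mul, abs_of_nonneg hγ0, mul_sum]
      _ ≤ γ * ∑ s, ∑ a, |d s a| :=
          mul_le_mul_of_nonneg_left (sum_sum_abs_flowStep_le hP0 hP1 hpol0 hpol1 d) hγ0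
  have hnorm : ∑ s, ∑ a, |d s a| = 0 := by
    have := sum_nonneg fun s (_ : s ∈ univ) => sum_nonneg fun a (_ : a ∈ univ) => abs_nonneg (d s a)
    nlinarith
  funext s a
  have := abs_le_sum_sum_abs d s a
  rw [hnorm] at this
  exact sub_eq_zero.mp (abs_nonpos_iff.mp this)

end Flow

section FlowBalance

variable {S A : Type*} [Fintype S] [Fintype A]

theorem eq_sum_mul_div_sum {f : A → ℝ} (hf : ∀ a, 0 ≤ f a) (a : A) :
    f a = (∑ b, f b) * (f a / ∑ b, f b) := by
  rcases (sum_nonneg fun b _ => hf b).eq_or_lt with h | h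
  · rw [← h, zero_mul]
    exact (sum_eq_zero_iff_of_nonneg fun b _ => hf b).mp h.symm a (mem_univ a)
  · rw [mul_div_cancel₀ _ h.ne']

variable [DecidableEq S] {γ : ℝ} {P : S → A → S → ℝ} {μ : S → ℝ} {ν : S → A → ℝ}

theorem sum_eq_of_flowBalance
    (hflow : ∀ s' : S, ∑ s, ∑ a, ν s a *
      ((if s = s' then (1 : ℝ) else 0) - γ * P s a s') = (1 - γ) * μ s') (s' : S) :
    ∑ a, ν s' a = (1 - γ) * μ s' + γ * ∑ s, ∑ a, ν s a * P s a s' := by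
  have h := hflow s'
  simp only [mul_sub, mul_ite, mul_one, mul_zero, sum_sub_distrib, sum_ite_irrel,
    sum_const_zero, sum_ite_eq', mem_univ, if_true, mul_left_comm _ γ, ← mul_sum] at h
  linarith

theorem isFixedPt_flowMap_of_flowBalance {pol : S → A → ℝ} (hν0 : ∀ s a, 0 ≤ ν s a)
    (hflow : ∀ s' : S, ∑ s, ∑ a, ν s a *
      ((if s = s' then (1 : ℝ) else 0) - γ * P s a s') = (1 - γ) * μ s')
    (hpol : ∀ s a, pol s a = ν s a / ∑ a', ν s a') :
    IsFixedPt (flowMap γ P pol μ) ν := by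
  funext s a
  have hν : ν s a = (∑ a', ν s a') * pol s a := by
    rw [hpol]
    exact eq_sum_mul_div_sum (hν0 s) a
  rw [hν, sum_eq_of_flowBalance hflow s]
  simp only [flowMap, flowStep]
  ring

end FlowBalance

theorem stmt_12_general {S A : Type*} [Fintype S] [Fintype A] [DecidableEq S]
    (γ : ℝ) (hγ : γ ∈ Set.Ioo (0 : ℝ) 1)
    (P : S → A → S → ℝ) (hP0 : ∀ s a s', 0 ≤ P s a s')
    (hP1 : ∀ s a, ∑ s', P s a s' = 1)
    (μ₀ : S → ℝ)
    (ν : S → A → ℝ) (hν0 : ∀ s a, 0 ≤ ν s a)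
    (hflow : ∀ s' : S, ∑ s, ∑ a, ν s a *
        ((if s = s' then (1 : ℝ) else 0) - γ * P s a s') = (1 - γ) * μ₀ s')
    (tπ : S → A → ℝ) (htπ : ∀ s a, tπ s a = ν s a / ∑ a', ν s a') :
    ∀ s a, 0 < ∑ a', ν s a' → occMeas γ P tπ μ₀ s a = ν s a := by
  intro s a _
  have hP1' : ∀ s a, ∑ s', P s a s' ≤ 1 := fun s a => (hP1 s a).le
  have htπ0 : ∀ s a, 0 ≤ tπ s a := fun s a => by
    rw [htπ]
    exact div_nonneg (hν0 s a) (sum_nonneg fun a' _ => hν0 s a')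
  have htπ1 : ∀ s, ∑ a, tπ s a ≤ 1 := fun s => by
    simp only [htπ, ← sum_div]
    exact div_self_le_one _
  have hocc := isFixedPt_occMeas hP0 hP1' htπ0 htπ1 hγ.1.le hγ.2 μ₀
  have hν := isFixedPt_flowMap_of_flowBalance hν0 hflow htπ
  exact congrFun (congrFun (hocc.eq_of_flowMap hP0 hP1' htπ0 htπ1 hγ.1.le hγ.2 hν) s) a

/-- Any nonnegative solution `ν` of the flow-balance equations is the
occupation measure of the stationary policy `π̃(a|s) = ν(s,a)/Σ_{a'} ν(s,a')`
(at all states where the denominator is positive). -/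
theorem stmt_12 {S A : Type*} [Fintype S] [Fintype A] [DecidableEq S]
    [Nonempty S] [Nonempty A]
    (γ : ℝ) (hγ : γ ∈ Set.Ioo (0 : ℝ) 1)
    (P : S → A → S → ℝ) (hP0 : ∀ s a s', 0 ≤ P s a s')
    (hP1 : ∀ s a, ∑ s', P s a s' = 1)
    (μ₀ : S → ℝ) (hμ₀0 : ∀ s, 0 < μ₀ s) (hμ₀1 : ∑ s, μ₀ s = 1)
    (ν : S → A → ℝ) (hν0 : ∀ s a, 0 ≤ ν s a)
    (hflow : ∀ s' : S, ∑ s, ∑ a, ν s a *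
        ((if s = s' then (1 : ℝ) else 0) - γ * P s a s') = (1 - γ) * μ₀ s')
    (tπ : S → A → ℝ) (htπ : ∀ s a, tπ s a = ν s a / ∑ a', ν s a') :
    ∀ s a, 0 < ∑ a', ν s a' → occMeas γ P tπ μ₀ s a = ν s a :=
  stmt_12_general γ hγ P hP0 hP1 μ₀ ν hν0 hflow tπ htπ
end
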